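/- arXiv:2311.01035 — 7 statements merged into one kernel-verified Lean document; each statement's English description precedes it below -/
import Mathlib

section
/- The periodic autocorrelation of a Zadoff–Chu sequence satisfies R_{u,u}[τ] = Σ_{n=0}^{N-1} x_u[n]·conj(x_u[n+τ]) = N if N divides τ, and 0 otherwise. -/
/-!
With `η = exp (π i / N)`, a primitive `2N`-th root of unity, the sequence is
`x n = η ^ (-u n (n + c + 2q))`, hence
`x n * conj (x (n + τ)) = η ^ (u τ (τ + c + 2q)) * (η ^ (2uτ)) ^ n`: a constant times a
geometric progression in the `N`-th root of unity `η ^ (2uτ)`, which is `1` exactly when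
`N ∣ uτ`, i.e. when `N ∣ τ`. For `τ = N m` the constant is `1` as well, because `c ≡ N (mod 2)`
makes `m (N m + c + 2q)` even.
-/

open Complex Finset

theorem IsPrimitiveRoot.sum_range_zpow_pow {K : Type*} [Field K] {ζ : K} {N : ℕ}
    (hζ : IsPrimitiveRoot ζ N) (k : ℤ) :
    ∑ n ∈ range N, (ζ ^ k) ^ n = if (N : ℤ) ∣ k then (N : K) else 0 := by
  split_ifs with hk
  · simp [(hζ.zpow_eq_one_iff_dvd k).mpr hk]
  · have hζk_pow : (ζ ^ k) ^ N = 1 := by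
      rw [← zpow_natCast, ← zpow_mul, mul_comm, zpow_mul, zpow_natCast, hζ.pow_eq_one, one_zpow]
    rw [geom_sum_eq (mt (hζ.zpow_eq_one_iff_dvd k).mp hk), hζk_pow, sub_self, zero_div]

theorem Int.even_mul_mul_add_add_two_mul {a c : ℤ} (h : c % 2 = a % 2) (m q : ℤ) :
    Even (m * (a * m + c + 2 * q)) := by
  obtain ⟨r, hr⟩ : ∃ r, a = c + 2 * r := ⟨(a - c) / 2, by omega⟩
  obtain ⟨s, hs⟩ := Int.even_mul_succ_self m
  exact ⟨c * s + r * m * m + q * m, by rw [hr]; linear_combination c * hs⟩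

theorem Complex.isPrimitiveRoot_exp_pi_mul_I_div {N : ℕ} (hN : N ≠ 0) :
    IsPrimitiveRoot (exp (Real.pi * I / N)) (2 * N) := by
  convert isPrimitiveRoot_exp (2 * N) (by positivity) using 2
  push_cast
  field_simp

noncomputable def zadoffChu (N : ℕ) (u c q : ℤ) (n : ℤ) : ℂ :=
  exp (-((Real.pi : ℂ) * u * n * (n + c + 2 * q) / N) * I)

namespace zadoffChu

variable (N : ℕ) (u c q : ℤ)

theorem eq_zpow (n : ℤ) :
    zadoffChu N u c q n = exp (Real.pi * I / N) ^ (-(u * n * (n + c + 2 * q))) := by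
  rw [zadoffChu, ← exp_int_mul]
  congr 1
  push_cast
  ring

theorem conj_eq_zpow (n : ℤ) :
    starRingEnd ℂ (zadoffChu N u c q n) = exp (Real.pi * I / N) ^ (u * n * (n + c + 2 * q)) := by
  rw [zadoffChu, ← exp_conj, ← exp_int_mul]
  congr 1
  simp only [map_mul, map_neg, map_div₀, map_add, conj_I, conj_ofReal, map_intCast, map_natCast,
    map_ofNat]
  push_cast
  ring

theorem mul_conj_add (n τ : ℤ) :
    zadoffChu N u c q n * starRingEnd ℂ (zadoffChu N u c q (n + τ)) =
      exp (Real.pi * I / N) ^ (u * τ * (τ + c + 2 * q)) *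
        ((exp (Real.pi * I / N) ^ 2) ^ (u * τ)) ^ n := by
  rw [eq_zpow, conj_eq_zpow, ← zpow_natCast _ 2, ← zpow_mul, ← zpow_mul,
    ← zpow_add₀ (exp_ne_zero _), ← zpow_add₀ (exp_ne_zero _)]
  congr 1
  push_cast
  ring

end zadoffChu

/-- Perfect periodic autocorrelation of the Zadoff–Chu sequence. -/
theorem zc_autocorr (N : ℕ) (hN : 1 ≤ N) (u q c : ℤ) (hu : Int.gcd u (N : ℤ) = 1)
    (hc : c % 2 = (N : ℤ) % 2) (τ : ℤ)
    (x : ℤ → ℂ)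
    (hx : ∀ n : ℤ, x n =
      Complex.exp (-((Real.pi : ℂ) * u * (n : ℂ) * ((n : ℂ) + c + 2 * q) / N) * Complex.I)) :
    (∑ n ∈ Finset.range N, x n * (starRingEnd ℂ) (x (n + τ)))
      = if (N : ℤ) ∣ τ then (N : ℂ) else 0 := by
  obtain rfl : x = zadoffChu N u c q := funext hx
  simp_rw [zadoffChu.mul_conj_add, zpow_natCast]
  set η := exp (Real.pi * I / N)
  have hη : IsPrimitiveRoot η (2 * N) := isPrimitiveRoot_exp_pi_mul_I_div (by omega)
  have hN_dvd_iff : (N : ℤ) ∣ u * τ ↔ (N : ℤ) ∣ τ :=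
    ⟨(Int.isCoprime_iff_gcd_eq_one.mpr hu).symm.dvd_of_dvd_mul_left, (Dvd.dvd.mul_left · u)⟩
  rw [← mul_sum, (hη.pow (by omega) rfl).sum_range_zpow_pow, if_congr hN_dvd_iff rfl rfl]
  split_ifs with hτ
  · obtain ⟨m, rfl⟩ := hτ
    obtain ⟨e, he⟩ := Int.even_mul_mul_add_add_two_mul hc m q
    have hphase : η ^ (u * (N * m) * (N * m + c + 2 * q)) = 1 :=
      (hη.zpow_eq_one_iff_dvd _).mpr ⟨u * e, by push_cast; linear_combination (N : ℤ) * u * he⟩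
    rw [hphase, one_mul]
  · rw [mul_zero]
end

section
/- If u − v is coprime to N, then the absolute value of the cross-correlation of two Zadoff–Chu sequences with roots u and v equals √N for every lag τ: |Σ_{n=0}^{N-1} x_u[n]·conj(x_v[n+τ])| = √N. -/
/-!
Each term `x_u[n] · conj (x_v[n + τ])` equals `ζ ^ P n` for the primitive `2N`-th root of unity
`ζ = exp (-iπ/N)` and an integer quadratic `P n = a n² + b n + k` with `a = u - v`; the parity
condition `c ≡ N (mod 2)` makes `a N + b` even, which is exactly what makes `n ↦ ζ ^ P n` periodic
with period `N`. Expanding `|S|²` and shifting the inner index by periodicity gives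
`∑_d ζ ^ (a d² + b d) ∑_m (ζ²) ^ (a d m)`. As `a = u - v` is a unit mod `N`, the inner geometric
sum vanishes for `0 < d < N`, leaving `|S|² = N`.
-/

open Complex ComplexConjugate Finset
open scoped Real

theorem Function.Periodic.sum_range_comp_add {M : Type*} [AddCancelCommMonoid M] {f : ℤ → M}
    {N : ℕ} (hf : Function.Periodic f N) (m : ℤ) :
    ∑ n ∈ range N, f (n + m) = ∑ n ∈ range N, f n := by
  have step : ∀ g : ℤ → M, Function.Periodic g N →
      ∑ n ∈ range N, g (n + 1) = ∑ n ∈ range N, g n := by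
    intro g hg
    have h := (sum_range_succ' (fun n : ℕ => g n) N).symm.trans (sum_range_succ _ N)
    simp only [Nat.cast_add, Nat.cast_one, Nat.cast_zero] at h
    rwa [← zero_add (N : ℤ), hg, add_left_inj] at h
  induction m using Int.induction_on with
  | zero => simp
  | succ m ih =>
    rw [← ih, ← step _ (hf.add_const m)]
    exact sum_congr rfl fun n _ => congrArg f (by ring)
  | pred m ih =>
    rw [← ih, ← step _ (hf.add_const (-(m : ℤ) - 1))]
    exact sum_congr rfl fun n _ => congrArg f (by ring)

theorem Function.Periodic.sum_range_mul_conj {R : Type*} [CommRing R] [StarRing R] {f : ℤ → R}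
    {N : ℕ} (hf : Function.Periodic f N) :
    (∑ n ∈ range N, f n) * conj (∑ n ∈ range N, f n)
      = ∑ m ∈ range N, ∑ d ∈ range N, f (d + m) * conj (f m) := by
  rw [map_sum, sum_mul_sum, sum_comm]
  refine sum_congr rfl fun m _ => ?_
  have hg : Function.Periodic (fun n => f n * conj (f m)) N := fun n => by simp only [hf n]
  exact (hg.sum_range_comp_add m).symm

theorem IsPrimitiveRoot.geom_sum_zpow_eq_zero {K : Type*} [Field K] {ζ : K} {n : ℕ}
    (hζ : IsPrimitiveRoot ζ n) {j : ℤ} (hj : ¬ (n : ℤ) ∣ j) :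
    ∑ m ∈ range n, (ζ ^ j) ^ m = 0 := by
  rw [geom_sum_eq (mt (hζ.zpow_eq_one_iff_dvd j).mp hj), ← zpow_natCast, ← zpow_mul, mul_comm,
    zpow_mul, zpow_natCast, hζ.pow_eq_one, one_zpow, sub_self, zero_div]

theorem Complex.conj_zpow_of_norm_eq_one {z : ℂ} (hz : ‖z‖ = 1) (j : ℤ) :
    conj (z ^ j) = z ^ (-j) := by
  rw [map_zpow₀, ← inv_eq_conj hz, inv_zpow, zpow_neg]

theorem Complex.isPrimitiveRoot_exp_neg_pi_div {N : ℕ} (hN : N ≠ 0) :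
    IsPrimitiveRoot (exp (-(π / N) * I)) (2 * N) := by
  convert isPrimitiveRoot_exp_of_isCoprime (-1) (2 * N) (by positivity)
    isCoprime_one_left.neg_left using 2
  push_cast
  field_simp

theorem IsPrimitiveRoot.norm_sum_range_zpow_quadratic {ζ : ℂ} {N : ℕ}
    (hζ : IsPrimitiveRoot ζ (2 * N)) (hN : N ≠ 0) {a b k : ℤ} (ha : IsCoprime a N)
    (hab : Even (a * N + b)) :
    ‖∑ n ∈ range N, ζ ^ (a * n ^ 2 + b * n + k)‖ = √N := by
  have hζ0 : ζ ≠ 0 := hζ.ne_zero (by positivity)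
  set g : ℤ → ℂ := fun n => ζ ^ (a * n ^ 2 + b * n + k)
  obtain ⟨s, hs⟩ := hab
  have hg : Function.Periodic g N := fun n => by
    have : a * (n + N) ^ 2 + b * (n + N) + k
        = a * n ^ 2 + b * n + k + (2 * N : ℕ) * (a * n + s) := by
      push_cast
      linear_combination (N : ℤ) * hs
    simp only [g]
    rw [this, zpow_add₀ hζ0, zpow_mul, zpow_natCast, hζ.pow_eq_one, one_zpow, mul_one]
  have hcorr : ∀ d m : ℕ,
      g (d + m) * conj (g m) = ζ ^ (a * d ^ 2 + b * d) * ((ζ ^ 2) ^ (a * d)) ^ m := by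
    intro d m
    rw [conj_zpow_of_norm_eq_one (hζ.norm'_eq_one (by positivity)), ← zpow_natCast,
      ← zpow_natCast, ← zpow_mul, ← zpow_mul, ← zpow_add₀ hζ0, ← zpow_add₀ hζ0]
    congr 1
    ring
  have hgeom : ∀ d ∈ range N, d ≠ 0 → ∑ m ∈ range N, ((ζ ^ 2) ^ (a * d)) ^ m = 0 := by
    intro d hd hd0
    refine (hζ.pow (by positivity) rfl).geom_sum_zpow_eq_zero fun hdvd => ?_
    have hNd : (N : ℤ) ∣ d := ha.symm.dvd_of_dvd_mul_left hdvd
    have hNle := Int.le_of_dvd (by positivity) hNd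
    have hdlt := mem_range.mp hd
    omega
  have hsq : (∑ n ∈ range N, g n) * conj (∑ n ∈ range N, g n) = N := by
    rw [hg.sum_range_mul_conj, sum_comm]
    simp_rw [hcorr, ← mul_sum]
    rw [sum_eq_single 0 (fun d hd hd0 => by rw [hgeom d hd hd0, mul_zero]) (by simp [hN])]
    simp
  have hnorm_sq : ‖∑ n ∈ range N, g n‖ ^ 2 = N := by
    exact_mod_cast (mul_conj' _).symm.trans hsq
  rw [← hnorm_sq, Real.sqrt_sq (norm_nonneg _)]

theorem zc_crosscorr_abs_general (N : ℕ) (u v qu qv c : ℤ)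
    (huv : Int.gcd (u - v) (N : ℤ) = 1) (hc : c % 2 = (N : ℤ) % 2) (τ : ℤ)
    (xu xv : ℤ → ℂ)
    (hxu : ∀ n : ℤ, xu n =
      Complex.exp (-((Real.pi : ℂ) * u * (n : ℂ) * ((n : ℂ) + c + 2 * qu) / N) * Complex.I))
    (hxv : ∀ n : ℤ, xv n =
      Complex.exp (-((Real.pi : ℂ) * v * (n : ℂ) * ((n : ℂ) + c + 2 * qv) / N) * Complex.I)) :
    ‖(∑ n ∈ Finset.range N, xu n * (starRingEnd ℂ) (xv (n + τ)))‖
      = Real.sqrt N := by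
  rcases N.eq_zero_or_pos with rfl | hN
  · simp
  set ζ := exp (-(π / N) * I)
  have hζ : IsPrimitiveRoot ζ (2 * N) := isPrimitiveRoot_exp_neg_pi_div hN.ne'
  have hseq : ∀ (w q n : ℤ), exp (-((π : ℂ) * w * n * (n + c + 2 * q) / N) * I)
      = ζ ^ (w * n * (n + c + 2 * q)) := fun w q n => by
    rw [← exp_int_mul]
    push_cast
    ring_nf
  have hterm : ∀ n : ℤ, xu n * conj (xv (n + τ)) = ζ ^ ((u - v) * n ^ 2
      + (u * (c + 2 * qu) - v * (2 * τ + c + 2 * qv)) * n - v * τ * (τ + c + 2 * qv)) := by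
    intro n
    rw [hxu, hxv, hseq, hseq, conj_zpow_of_norm_eq_one (hζ.norm'_eq_one (by positivity)),
      ← zpow_add₀ (hζ.ne_zero (by positivity))]
    congr 1
    ring
  obtain ⟨t, ht⟩ : Even ((N : ℤ) + c) := by rw [Int.even_iff]; omega
  simp_rw [hterm]
  exact hζ.norm_sum_range_zpow_quadratic hN.ne' (Int.isCoprime_iff_gcd_eq_one.mpr huv)
    ⟨(u - v) * t + u * qu - v * τ - v * qv, by linear_combination (u - v) * ht⟩

/-- The cross-correlation of two Zadoff–Chu sequences with roots `u`, `v`, where `u - v` is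
coprime to `N`, has modulus `√N` for every lag `τ`. -/
theorem zc_crosscorr_abs (N : ℕ) (hN : 1 ≤ N) (u v qu qv c : ℤ)
    (huv : Int.gcd (u - v) (N : ℤ) = 1) (hc : c % 2 = (N : ℤ) % 2) (τ : ℤ)
    (xu xv : ℤ → ℂ)
    (hxu : ∀ n : ℤ, xu n =
      Complex.exp (-((Real.pi : ℂ) * u * (n : ℂ) * ((n : ℂ) + c + 2 * qu) / N) * Complex.I))
    (hxv : ∀ n : ℤ, xv n =
      Complex.exp (-((Real.pi : ℂ) * v * (n : ℂ) * ((n : ℂ) + c + 2 * qv) / N) * Complex.I)) :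
    ‖(∑ n ∈ Finset.range N, xu n * (starRingEnd ℂ) (xv (n + τ)))‖
      = Real.sqrt N :=
  zc_crosscorr_abs_general N u v qu qv c huv hc τ xu xv hxu hxv
end

section
/- For an odd prime N, the time-scaled Zadoff–Chu sequence equals a modulated Zadoff–Chu sequence with inverted root: conj(x_u[u⁻¹ k]) = conj(x_{u⁻¹}[k]) · exp(-iπ k (u⁻¹ − 1)(N+1)/N) for every integer k. -/
open Complex Real

/-! Write `n = u⁻¹ k`. Both sides are exponentials `exp (π i a / N)` with integer `a`, so it
suffices to compare the exponents modulo `2N`, and since `N` is odd this splits into a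
congruence modulo `N`, where `u u⁻¹ ≡ 1` turns `u n (n + 1)` into `k (u⁻¹ k + 1)`, and one
modulo `2`, where both exponents are even because `n (n + 1)` and `N + 1` are. -/

lemma exp_pi_mul_div_mul_I_eq_of_modEq {N : ℕ} {a b : ℤ} (h : a ≡ b [ZMOD 2 * N]) :
    exp (π * a / N * I) = exp (π * b / N * I) := by
  obtain ⟨t, ht⟩ := Int.modEq_iff_dvd.mp h.symm
  rcases eq_or_ne N 0 with rfl | hN
  · simp
  have hab : (a : ℂ) = b + 2 * N * t := by exact_mod_cast eq_add_of_sub_eq' ht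
  rw [hab, exp_eq_exp_iff_exists_int]
  exact ⟨t, by field_simp⟩

lemma conj_exp_neg_pi_mul_div_mul_I (N : ℕ) (w n : ℤ) :
    starRingEnd ℂ (exp (-(π * w * n * (n + 1) / N) * I))
      = exp (π * ((w * n * (n + 1) : ℤ) : ℂ) / N * I) := by
  rw [← exp_conj]
  congr 1
  simp only [map_mul, map_neg, map_div₀, map_add, map_one, conj_ofReal, map_intCast,
    map_natCast, conj_I]
  push_cast
  ring

lemma time_scaled_phase_modEq {N : ℕ} (hodd : Odd N) {u uinv : ℤ}
    (hinv : u * uinv ≡ 1 [ZMOD N]) (k : ℤ) :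
    u * (uinv * k) * (uinv * k + 1) ≡ uinv * k * (k + 1) - k * (uinv - 1) * (N + 1)
      [ZMOD 2 * N] := by
  have hcop : (2 : ℤ).natAbs.Coprime (N : ℤ).natAbs := Nat.coprime_two_left.mpr hodd
  refine (Int.modEq_and_modEq_iff_modEq_mul hcop).mp ⟨?_, ?_⟩
  · have hlhs : Even (u * (uinv * k) * (uinv * k + 1)) := by
      rw [mul_assoc]
      exact (Int.even_mul_succ_self _).mul_left u
    have hrhs : Even (uinv * k * (k + 1) - k * (uinv - 1) * (N + 1)) := by
      rw [mul_assoc]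
      exact ((Int.even_mul_succ_self k).mul_left uinv).sub
        ((by exact_mod_cast hodd.add_one : Even ((N : ℤ) + 1)).mul_left _)
    exact (Int.even_iff.mp hlhs).trans (Int.even_iff.mp hrhs).symm
  · rw [← ZMod.intCast_eq_intCast_iff] at hinv ⊢
    push_cast [ZMod.natCast_self] at hinv ⊢
    linear_combination k * (uinv * k + 1) * hinv

theorem zc_time_scaled_general (N : ℕ) (hodd : Odd N) (u uinv : ℤ)
    (hinv : u * uinv ≡ 1 [ZMOD (N : ℤ)])
    (x : ℤ → ℤ → ℂ)
    (hx : ∀ w n : ℤ, x w n =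
      Complex.exp (-((Real.pi : ℂ) * w * (n : ℂ) * ((n : ℂ) + 1) / N) * Complex.I))
    (k : ℤ) :
    (starRingEnd ℂ) (x u (uinv * k))
      = (starRingEnd ℂ) (x uinv k)
        * Complex.exp (-((Real.pi : ℂ) * k * ((uinv : ℂ) - 1) * ((N : ℂ) + 1) / N)
            * Complex.I) := by
  calc starRingEnd ℂ (x u (uinv * k))
      = exp (π * ((u * (uinv * k) * (uinv * k + 1) : ℤ) : ℂ) / N * I) := by
        rw [hx, conj_exp_neg_pi_mul_div_mul_I]
    _ = exp (π * ((uinv * k * (k + 1) - k * (uinv - 1) * (N + 1) : ℤ) : ℂ) / N * I) :=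
        exp_pi_mul_div_mul_I_eq_of_modEq (time_scaled_phase_modEq hodd hinv k)
    _ = _ := by
        rw [hx, conj_exp_neg_pi_mul_div_mul_I, ← Complex.exp_add]
        congr 1
        push_cast
        ring

/-- The time-scaled Zadoff–Chu sequence equals a modulated Zadoff–Chu sequence with
inverted root. -/
theorem zc_time_scaled (N : ℕ) (hN : N.Prime) (hodd : Odd N) (u uinv : ℤ)
    (hu : Int.gcd u (N : ℤ) = 1) (hinv : u * uinv ≡ 1 [ZMOD (N : ℤ)])
    (x : ℤ → ℤ → ℂ)
    (hx : ∀ w n : ℤ, x w n =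
      Complex.exp (-((Real.pi : ℂ) * w * (n : ℂ) * ((n : ℂ) + 1) / N) * Complex.I))
    (k : ℤ) :
    (starRingEnd ℂ) (x u (uinv * k))
      = (starRingEnd ℂ) (x uinv k)
        * Complex.exp (-((Real.pi : ℂ) * k * ((uinv : ℂ) - 1) * ((N : ℂ) + 1) / N)
            * Complex.I) :=
  zc_time_scaled_general N hodd u uinv hinv x hx k
end

section
/- For an odd prime N, the quadratic Gauss sum g_N = Σ_{n=0}^{N-1} exp(2πi n²/N) equals √N if N ≡ 1 (mod 4), and i√N if N ≡ 3 (mod 4). -/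
open Complex

/-!
Schur's evaluation. Write `p = 2 * m + 1`. For a primitive `p`-th root of unity `ζ`, the Gauss sum
`g = ∑ ζ^(n²)` and Schur's product `P = ∏_{k<m} (ζ^(2k+1) - ζ^-(2k+1))` both square to `(-1)^m p`
(the first by the theory of Gauss sums, the second by pairing `s` with `p - s` in
`∏_{0<s<p} (ζ^s - 1) = p`), so `g = ±P`. If `g = -P`, the cyclotomic polynomial `Φ_p` would divide
`∑ X^(n²) + ∏ (X^(2k+1) - X^(p-2k-1))` in `ℤ[X]`. Substituting `X = 1 + ε` in `𝔽_p[ε]/(ε^(m+1))`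
kills `Φ_p ≡ (X - 1)^(p-1)`, while `m!` times either summand becomes `-ε^m`: for the Gauss sum
because `∑_n n^(2j)` vanishes mod `p` unless `2j = p - 1`, for the product because each factor is
`2(2k+1) ε` modulo `ε²` and `m! ∏ 2(2k+1) = (p-1)! = -1`. As `2 ≠ 0` in `𝔽_p`, this is
impossible, so `g = P`. For `ζ = exp(2πi/p)` the product is `(2i)^m ∏ sin(2π(2k+1)/p)`, in which
exactly `⌊m/2⌋` sines are negative; hence `g = i^(m mod 2) √p`.
-/

open Polynomial Finset

theorem FiniteField.sum_pow_card_sub_one {K : Type*} [Field K] [Fintype K] :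
    ∑ x : K, x ^ (Fintype.card K - 1) = -1 := by
  classical
  have hq : 1 < Fintype.card K := Fintype.one_lt_card
  rw [← sum_erase_add _ _ (mem_univ 0), zero_pow (by omega), add_zero,
    sum_congr rfl fun x hx => FiniteField.pow_card_sub_one_eq_one x (ne_of_mem_erase hx),
    sum_const, card_erase_of_mem (mem_univ _), card_univ, nsmul_one,
    Nat.cast_sub hq.le, FiniteField.cast_card_eq_zero, zero_sub, Nat.cast_one]

theorem FiniteField.sum_eval_eq_neg_coeff {K : Type*} [Field K] [Fintype K] (f : K[X])
    (hf : f.natDegree < Fintype.card K) :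
    ∑ x : K, f.eval x = -f.coeff (Fintype.card K - 1) := by
  have hq : 1 < Fintype.card K := Fintype.one_lt_card
  simp_rw [eval_eq_sum_range' hf]
  rw [sum_comm, ← Nat.sub_add_cancel hq.le, sum_range_succ, Nat.add_sub_cancel]
  simp_rw [← mul_sum]
  rw [sum_eq_zero fun i hi => by rw [FiniteField.sum_pow_lt_card_sub_one K i (mem_range.1 hi),
    mul_zero], FiniteField.sum_pow_card_sub_one, zero_add, mul_neg_one]

theorem Finset.sum_range_natCast_zmod {M : Type*} [AddCommMonoid M] (n : ℕ) [NeZero n]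
    (f : ZMod n → M) : ∑ i ∈ range n, f i = ∑ x : ZMod n, f x :=
  sum_nbij' (↑) ZMod.val (fun _ _ => mem_univ _) (fun x _ => mem_range.2 x.val_lt)
    (fun _ hi => ZMod.val_cast_of_lt (mem_range.1 hi)) (fun x _ => ZMod.natCast_zmod_val x)
    (fun _ _ => rfl)

section Nilpotent

variable {A : Type*} [CommRing A] {ε : A} {m : ℕ}

theorem one_add_pow_eq_sum_range_of_pow_eq_zero (hε : ε ^ (m + 1) = 0) (e : ℕ) :
    (1 + ε) ^ e = ∑ j ∈ range (m + 1), (e.choose j : A) * ε ^ j := by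
  have extend : ∀ n, m + 1 ≤ n → ∑ j ∈ range (m + 1), (e.choose j : A) * ε ^ j =
      ∑ j ∈ range n, (e.choose j : A) * ε ^ j := fun n hn =>
    sum_subset (range_subset_range.2 hn) fun j _ hj => by
      rw [pow_eq_zero_of_le (by simpa using hj) hε, mul_zero]
  have full : (1 + ε) ^ e = ∑ j ∈ range (e + 1), (e.choose j : A) * ε ^ j := by
    rw [add_comm, add_pow]
    exact sum_congr rfl fun j _ => by ring
  rw [full, extend (e + m + 1) (by omega)]
  exact sum_subset (range_subset_range.2 (by omega)) fun j _ hj => by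
    rw [Nat.choose_eq_zero_of_lt (by simpa using hj), Nat.cast_zero, zero_mul]

theorem mk_span_singleton_one_add_self :
    Ideal.Quotient.mk (Ideal.span {ε}) (1 + ε) = 1 := by
  rw [map_add, map_one, Ideal.Quotient.eq_zero_iff_mem.2 (Ideal.mem_span_singleton_self ε),
    add_zero]

theorem pow_mul_eq_pow_mul_of_mk_span_eq (hε : ε ^ (m + 1) = 0) {x y : A}
    (h : Ideal.Quotient.mk (Ideal.span {ε}) x = Ideal.Quotient.mk (Ideal.span {ε}) y) :
    ε ^ m * x = ε ^ m * y := by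
  obtain ⟨z, hz⟩ := Ideal.mem_span_singleton'.1 (Ideal.Quotient.eq.1 h)
  linear_combination (-ε ^ m) * hz + z * hε

theorem one_add_pow_sub_one_add_pow (a b : ℕ) :
    ∃ u, (1 + ε) ^ a - (1 + ε) ^ b = ε * u ∧
      Ideal.Quotient.mk (Ideal.span {ε}) u = Ideal.Quotient.mk (Ideal.span {ε}) (a - b) := by
  refine ⟨∑ i ∈ range a, (1 + ε) ^ i - ∑ i ∈ range b, (1 + ε) ^ i, ?_, ?_⟩
  · linear_combination geom_sum_mul (1 + ε) b - geom_sum_mul (1 + ε) a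
  · simp [map_sum, mk_span_singleton_one_add_self]

end Nilpotent

open Nat in
theorem Nat.factorial_mul_prod_two_mul_odd (m : ℕ) :
    m ! * ∏ k ∈ range m, 2 * (2 * k + 1) = (2 * m)! := by
  induction m with
  | zero => simp
  | succ m ih =>
    rw [prod_range_succ, ← mul_assoc, factorial_succ, mul_assoc (m + 1), ih,
      show 2 * (m + 1) = 2 * m + 1 + 1 by ring, factorial_succ, factorial_succ]
    ring

open Nat in
theorem ZMod.factorial_mul_sum_choose_sq {p m j : ℕ} [Fact p.Prime] (hpm : p = 2 * m + 1)
    (hj : j ≤ m) :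
    ((m ! * ∑ n ∈ range p, (n ^ 2).choose j : ℕ) : ZMod p) = if j = m then -1 else 0 := by
  set f : (ZMod p)[X] := (descPochhammer (ZMod p) j).comp (X ^ 2)
  have hdeg : f.natDegree = 2 * j := by
    simp [f, natDegree_comp, descPochhammer_natDegree, mul_comm]
  have hsum : ((j ! * ∑ n ∈ range p, (n ^ 2).choose j : ℕ) : ZMod p) = -f.coeff (2 * m) := by
    have : ∀ n : ℕ, ((j ! * (n ^ 2).choose j : ℕ) : ZMod p) = f.eval (n : ZMod p) := fun n => by
      rw [eval_comp, eval_pow, eval_X, ← Nat.cast_pow, descPochhammer_eval_eq_descFactorial,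
        Nat.descFactorial_eq_factorial_mul_choose]
    rw [mul_sum, Nat.cast_sum, sum_congr rfl fun n _ => this n,
      sum_range_natCast_zmod p (fun x => f.eval x),
      FiniteField.sum_eval_eq_neg_coeff f (by rw [ZMod.card]; omega), ZMod.card]
    congr 2
    omega
  obtain ⟨c, hc⟩ := Nat.factorial_dvd_factorial hj
  split_ifs with hjm
  · subst hjm
    have hmonic : f.Monic :=
      (monic_descPochhammer _ _).comp (monic_X_pow 2) (by simp)
    rw [hsum, ← hdeg, hmonic.coeff_natDegree]
  · rw [hc, mul_comm _ c, mul_assoc, Nat.cast_mul, hsum,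
      coeff_eq_zero_of_natDegree_lt (by omega), neg_zero, mul_zero]

noncomputable def gaussPoly (p : ℕ) : ℤ[X] := ∑ n ∈ range p, X ^ (n ^ 2)

noncomputable def schurPoly (p m : ℕ) : ℤ[X] :=
  ∏ k ∈ range m, (X ^ (2 * k + 1) - X ^ (p - (2 * k + 1)))

section Reduction

open Nat

variable {p m : ℕ} [Fact p.Prime] {A : Type*} [CommRing A] [Algebra (ZMod p) A] {ε : A}

theorem aeval_one_add_cyclotomic (hpm : p = 2 * m + 1) (hε : ε ^ (m + 1) = 0) :
    aeval (1 + ε) (cyclotomic p ℤ) = 0 := by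
  have hp := (Fact.out : p.Prime).two_le
  have hcyc : cyclotomic p (ZMod p) = (X - 1) ^ (p - 1) := by
    simpa using cyclotomic_mul_prime_eq_pow_of_not_dvd (ZMod p) (n := 1)
      (Nat.Prime.not_dvd_one Fact.out)
  rw [← aeval_map_algebraMap (ZMod p), algebraMap_int_eq, map_cyclotomic_int, hcyc, map_pow,
    map_sub, aeval_X, map_one, add_sub_cancel_left]
  exact pow_eq_zero_of_le (by omega) hε

theorem factorial_mul_aeval_one_add_gaussPoly (hpm : p = 2 * m + 1) (hε : ε ^ (m + 1) = 0) :
    (m ! : A) * aeval (1 + ε) (gaussPoly p) = -ε ^ m := by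
  simp_rw [gaussPoly, map_sum, map_pow, aeval_X, one_add_pow_eq_sum_range_of_pow_eq_zero hε]
  rw [sum_comm, mul_sum]
  have coeff : ∀ j ∈ range (m + 1), (m ! : A) * ∑ n ∈ range p, ((n ^ 2).choose j : A) * ε ^ j =
      if j = m then -ε ^ j else 0 := fun j hj => by
    rw [← sum_mul, ← mul_assoc, ← Nat.cast_sum, ← Nat.cast_mul,
      ← map_natCast (algebraMap (ZMod p) A),
      ZMod.factorial_mul_sum_choose_sq hpm (Nat.lt_succ_iff.1 (mem_range.1 hj))]
    split_ifs <;> simp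
  rw [sum_congr rfl coeff, sum_ite_eq' _ _ (fun j => -ε ^ j), if_pos (self_mem_range_succ m)]

theorem factorial_mul_aeval_one_add_schurPoly (hpm : p = 2 * m + 1) (hε : ε ^ (m + 1) = 0) :
    (m ! : A) * aeval (1 + ε) (schurPoly p m) = -ε ^ m := by
  choose u hu hmk using fun k : ℕ =>
    one_add_pow_sub_one_add_pow (ε := ε) (2 * k + 1) (p - (2 * k + 1))
  have hp : (p : A) = 0 := by
    rw [← map_natCast (algebraMap (ZMod p) A), ZMod.natCast_self, map_zero]
  have hmk' : ∀ k ∈ range m, Ideal.Quotient.mk (Ideal.span {ε}) (u k) =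
      Ideal.Quotient.mk (Ideal.span {ε}) ((2 * (2 * k + 1) : ℕ) : A) := fun k hk => by
    rw [hmk, Nat.cast_sub (by have := mem_range.1 hk; omega), hp]
    congr 1
    push_cast
    ring
  simp_rw [schurPoly, map_prod, map_sub, map_pow, aeval_X, hu, prod_mul_distrib, prod_const,
    card_range]
  have hprod :
      ε ^ m * ∏ k ∈ range m, u k = ε ^ m * ((∏ k ∈ range m, 2 * (2 * k + 1) : ℕ) : A) :=
    pow_mul_eq_pow_mul_of_mk_span_eq hε (by
      rw [map_prod, Nat.cast_prod, map_prod]; exact prod_congr rfl hmk')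
  calc (m ! : A) * (ε ^ m * ∏ k ∈ range m, u k)
      = ε ^ m * ((m ! * ∏ k ∈ range m, 2 * (2 * k + 1) : ℕ) : A) := by
        rw [Nat.cast_mul]; linear_combination (m ! : A) * hprod
    _ = ε ^ m * (((p - 1) ! : ℕ) : A) := by
        rw [factorial_mul_prod_two_mul_odd, show 2 * m = p - 1 by omega]
    _ = -ε ^ m := by
        rw [← map_natCast (algebraMap (ZMod p) A), ZMod.wilsons_lemma, map_neg, map_one,
          mul_neg_one]

theorem not_cyclotomic_dvd_of_two_mul_pow_ne_zero (hpm : p = 2 * m + 1) (hε : ε ^ (m + 1) = 0)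
    (h2 : 2 * ε ^ m ≠ 0) : ¬ cyclotomic p ℤ ∣ gaussPoly p + schurPoly p m := by
  rintro ⟨G, hG⟩
  have h := congrArg (fun F => (m ! : A) * aeval (1 + ε) F) hG
  simp only [map_add, mul_add, map_mul, factorial_mul_aeval_one_add_gaussPoly hpm hε,
    factorial_mul_aeval_one_add_schurPoly hpm hε, aeval_one_add_cyclotomic hpm hε, zero_mul,
    mul_zero] at h
  exact h2 (by linear_combination -h)

end Reduction

theorem not_cyclotomic_dvd_gaussPoly_add_schurPoly {p m : ℕ} (hp : p.Prime) (hpm : p = 2 * m + 1) :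
    ¬ cyclotomic p ℤ ∣ gaussPoly p + schurPoly p m := by
  have : Fact p.Prime := ⟨hp⟩
  have hε : AdjoinRoot.root (X ^ (m + 1) : (ZMod p)[X]) ^ (m + 1) = 0 := by
    rw [← AdjoinRoot.mk_X, ← map_pow, AdjoinRoot.mk_self]
  refine not_cyclotomic_dvd_of_two_mul_pow_ne_zero hpm hε fun h => ?_
  have htwo : (2 : ZMod p) ≠ 0 := fun h2 => by
    have := Nat.le_of_dvd two_pos ((ZMod.natCast_eq_zero_iff 2 p).1 (by exact_mod_cast h2))
    have := hp.two_le
    omega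
  rw [← AdjoinRoot.mk_X, ← map_pow, ← map_ofNat (AdjoinRoot.mk _), ← map_mul,
    AdjoinRoot.mk_eq_zero, X_pow_dvd_iff] at h
  exact htwo (by simpa using h m m.lt_succ_self)

section QuadraticGaussSum

variable {F R : Type*} [Field F] [Fintype F] [DecidableEq F] [CommRing R] [IsDomain R]
  {ψ : AddChar F R}

theorem sum_addChar_sq_eq_gaussSum (hF : ringChar F ≠ 2) (hψ : ψ ≠ 1) :
    ∑ x, ψ (x ^ 2) = gaussSum ((quadraticChar F).ringHomComp (Int.castRingHom R)) ψ := by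
  have hfiber : ∀ y : F, ∑ x ∈ {x | x ^ 2 = y}, ψ (x ^ 2) =
      ((quadraticChar F y : ℤ) : R) * ψ y + ψ y := fun y => by
    rw [sum_congr rfl fun x hx => by rw [(mem_filter.1 hx).2], sum_const, nsmul_eq_mul,
      ← Set.toFinset_ofPred, ← Int.cast_natCast, quadraticChar_card_sqrts hF y]
    push_cast
    ring
  rw [← sum_fiberwise univ (fun x => x ^ 2), sum_congr rfl fun y _ => hfiber y, sum_add_distrib,
    AddChar.sum_eq_zero_of_ne_one hψ, add_zero]
  rfl

theorem sq_sum_addChar_sq (hF : ringChar F ≠ 2) (hR : ringChar R ≠ 2) (hψ : ψ ≠ 1) :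
    (∑ x, ψ (x ^ 2)) ^ 2 = (ZMod.χ₄ (Fintype.card F) : R) * Fintype.card F := by
  have hχ : (quadraticChar F).ringHomComp (Int.castRingHom R) ≠ 1 := by
    obtain ⟨a, ha⟩ := quadraticChar_exists_neg_one' hF
    refine MulChar.ne_one_iff.2 ⟨a, ?_⟩
    simpa [ha] using Ring.neg_one_ne_one_of_char_ne_two hR
  rw [sum_addChar_sq_eq_gaussSum hF hψ, gaussSum_sq hχ
    ((quadraticChar_isQuadratic F).comp _) (AddChar.IsPrimitive.of_ne_one hψ)]
  simp [quadraticChar_neg_one hF]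

end QuadraticGaussSum

theorem sq_aeval_gaussPoly {p m : ℕ} {K : Type*} [Field K] (hK : ringChar K ≠ 2) {ζ : K}
    (hp : p.Prime) (hpm : p = 2 * m + 1) (hζ : IsPrimitiveRoot ζ p) :
    (aeval ζ (gaussPoly p)) ^ 2 = (-1) ^ m * p := by
  have : Fact p.Prime := ⟨hp⟩
  let ψ := AddChar.zmodChar p hζ.pow_eq_one
  have hψ : ψ ≠ 1 := fun h => hζ.ne_one hp.one_lt (by
    simpa [ψ, AddChar.zmodChar_apply, ZMod.val_one] using DFunLike.congr_fun h 1)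
  have hsum : aeval ζ (gaussPoly p) = ∑ x : ZMod p, ψ (x ^ 2) := by
    rw [← sum_range_natCast_zmod, gaussPoly, map_sum]
    exact sum_congr rfl fun n _ => by
      rw [map_pow, aeval_X, ← Nat.cast_pow, AddChar.zmodChar_apply']
  rw [hsum, sq_sum_addChar_sq (by rw [ZMod.ringChar_zmod_n]; omega) hK hψ, ZMod.card,
    ZMod.χ₄_eq_neg_one_pow (by omega), show p / 2 = m by omega]
  push_cast
  ring

theorem Finset.prod_range_two_mul {M : Type*} [CommMonoid M] (f : ℕ → M) (m : ℕ) :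
    ∏ i ∈ range (2 * m), f i = ∏ k ∈ range m, (f (2 * k) * f (2 * k + 1)) := by
  induction m with
  | zero => simp
  | succ m ih => rw [mul_add_one, prod_range_succ, prod_range_succ, prod_range_succ, ih, mul_assoc]

section PrimitiveRoot

variable {R : Type*} [CommRing R] [IsDomain R] {ζ : R} {p m : ℕ}

theorem IsPrimitiveRoot.prod_pow_sub_pow_sub (hζ : IsPrimitiveRoot ζ p) (hpm : p = 2 * m + 1) :
    ∏ s ∈ range (2 * m), (ζ ^ (s + 1) - ζ ^ (p - (s + 1))) = p := by
  have hfactor : ∀ s ∈ range (2 * m),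
      ζ ^ (s + 1) - ζ ^ (p - (s + 1)) = ζ ^ (p - (s + 1)) * ((ζ ^ 2) ^ (s + 1) - 1) := by
    intro s hs
    have := mem_range.1 hs
    rw [mul_sub, mul_one, ← pow_mul, ← pow_add, show p - (s + 1) + 2 * (s + 1) = p + (s + 1) by
      omega, pow_add ζ p, hζ.pow_eq_one, one_mul]
  have hsum : ∑ s ∈ range (2 * m), (p - (s + 1)) = m * p := by
    have hrefl : ∑ s ∈ range (2 * m), (p - (s + 1)) = ∑ s ∈ range (2 * m), (s + 1) := by
      rw [← sum_range_reflect]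
      exact sum_congr rfl fun s hs => by have := mem_range.1 hs; omega
    have hpair : ∑ s ∈ range (2 * m), ((p - (s + 1)) + (s + 1)) = 2 * m * p := by
      rw [sum_congr rfl fun s hs => (show p - (s + 1) + (s + 1) = p by
        have := mem_range.1 hs; omega), sum_const, card_range, smul_eq_mul]
    rw [sum_add_distrib, ← hrefl] at hpair
    linarith
  have hζ2 : IsPrimitiveRoot (ζ ^ 2) (2 * m + 1) :=
    hpm ▸ hζ.pow_of_coprime 2 (by rw [Nat.coprime_two_left]; exact hpm ▸ odd_two_mul_add_one m)
  have horder := hζ2.prod_pow_sub_one_eq_order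
  rw [pow_mul, neg_one_sq, one_pow, one_mul] at horder
  rw [prod_congr rfl hfactor, prod_mul_distrib, prod_pow_eq_pow_sum, hsum, pow_mul',
    hζ.pow_eq_one, one_pow, one_mul, horder, hpm]
  push_cast
  ring

theorem sq_aeval_schurPoly (hζ : IsPrimitiveRoot ζ p) (hpm : p = 2 * m + 1) :
    (aeval ζ (schurPoly p m)) ^ 2 = (-1) ^ m * p := by
  set f : ℕ → R := fun s => ζ ^ s - ζ ^ (p - s)
  have hP : aeval ζ (schurPoly p m) = ∏ k ∈ range m, f (2 * k + 1) := by
    simp [schurPoly, f]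
  have hodd_even : ∏ k ∈ range m, f (2 * k + 1 + 1) = (-1) ^ m * ∏ k ∈ range m, f (2 * k + 1) :=
    calc ∏ k ∈ range m, f (2 * k + 1 + 1)
        = ∏ k ∈ range m, f (2 * (m - 1 - k) + 1 + 1) := (prod_range_reflect _ m).symm
      _ = ∏ k ∈ range m, -f (2 * k + 1) := prod_congr rfl fun k hk => by
          have := mem_range.1 hk
          simp only [f]
          rw [show p - (2 * (m - 1 - k) + 1 + 1) = 2 * k + 1 by omega,
            show 2 * (m - 1 - k) + 1 + 1 = p - (2 * k + 1) by omega, neg_sub]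
      _ = (-1) ^ m * ∏ k ∈ range m, f (2 * k + 1) := by rw [prod_neg, card_range]
  have hpair := hζ.prod_pow_sub_pow_sub hpm
  rw [prod_range_two_mul, prod_mul_distrib, hodd_even, ← hP] at hpair
  rw [← hpair]
  linear_combination (-(aeval ζ (schurPoly p m)) ^ 2) *
    (Even.neg_one_pow ⟨m, rfl⟩ : (-1 : R) ^ (m + m) = 1)

end PrimitiveRoot

theorem aeval_gaussPoly_eq_aeval_schurPoly {p m : ℕ} {K : Type*} [Field K] [CharZero K] {ζ : K}
    (hp : p.Prime) (hpm : p = 2 * m + 1) (hζ : IsPrimitiveRoot ζ p) :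
    aeval ζ (gaussPoly p) = aeval ζ (schurPoly p m) := by
  have hsq : (aeval ζ (gaussPoly p)) ^ 2 = (aeval ζ (schurPoly p m)) ^ 2 := by
    rw [sq_aeval_gaussPoly (by simp [ringChar.eq_zero]) hp hpm hζ, sq_aeval_schurPoly hζ hpm]
  refine (sq_eq_sq_iff_eq_or_eq_neg.1 hsq).resolve_right fun hneg => ?_
  apply not_cyclotomic_dvd_gaussPoly_add_schurPoly hp hpm
  rw [cyclotomic_eq_minpoly hζ hp.pos]
  exact minpoly.isIntegrallyClosed_dvd (hζ.isIntegral hp.pos) (by simp [hneg])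

theorem Complex.exp_two_pi_mul_I_div_pow_sub_pow {p a : ℕ} (hp : p ≠ 0) (ha : a ≤ p) :
    exp (2 * Real.pi * I / p) ^ a - exp (2 * Real.pi * I / p) ^ (p - a) =
      2 * I * (Real.sin (2 * Real.pi * a / p) : ℝ) := by
  have hθ : ∀ n : ℕ, exp (2 * Real.pi * I / p) ^ n = exp ((2 * Real.pi * n / p : ℝ) * I) :=
    fun n => by rw [← Complex.exp_nat_mul]; push_cast; ring_nf
  rw [hθ, hθ, Nat.cast_sub ha,
    show 2 * Real.pi * (p - a : ℝ) / p = -(2 * Real.pi * a / p) + 2 * Real.pi by field_simp; ring]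
  push_cast
  rw [add_mul, Complex.exp_add, exp_two_pi_mul_I, mul_one, exp_mul_I, exp_mul_I, cos_neg, sin_neg]
  ring

theorem neg_one_pow_mul_prod_pos {f : ℕ → ℝ} {l m : ℕ} (hl : l ≤ m) (hpos : ∀ k < l, 0 < f k)
    (hneg : ∀ k, l ≤ k → k < m → f k < 0) : 0 < (-1) ^ (m - l) * ∏ k ∈ range m, f k := by
  rw [← prod_range_mul_prod_Ico f hl, mul_left_comm, ← Nat.card_Ico, ← prod_neg]
  exact mul_pos (prod_pos fun k hk => hpos k (mem_range.1 hk))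
    (prod_pos fun k hk => neg_pos.2 (hneg k (mem_Ico.1 hk).1 (mem_Ico.1 hk).2))

theorem Real.sin_two_pi_mul_div_pos {a p : ℕ} (ha : 0 < a) (hap : 2 * a < p) :
    0 < Real.sin (2 * Real.pi * a / p) := by
  have hap' : (2 * a : ℝ) < p := by exact_mod_cast hap
  have hp : (0 : ℝ) < p := by linarith [(a.cast_nonneg : (0 : ℝ) ≤ a)]
  apply Real.sin_pos_of_pos_of_lt_pi (by positivity)
  rw [div_lt_iff₀ (by linarith [Real.pi_pos])]
  nlinarith [Real.pi_pos]

theorem Real.sin_two_pi_mul_div_neg {a p : ℕ} (hpa : p < 2 * a) (hap : a < p) :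
    Real.sin (2 * Real.pi * a / p) < 0 := by
  have hpa' : (p : ℝ) < 2 * a := by exact_mod_cast hpa
  have hap' : (a : ℝ) < p := by exact_mod_cast hap
  have hp : (0 : ℝ) < p := by linarith [(a.cast_nonneg : (0 : ℝ) ≤ a)]
  rw [← neg_neg (Real.sin _), ← Real.sin_sub_pi, neg_neg_iff_pos]
  apply Real.sin_pos_of_pos_of_lt_pi
  · rw [sub_pos, lt_div_iff₀ hp]; nlinarith [Real.pi_pos]
  · rw [sub_lt_iff_lt_add, div_lt_iff₀ hp]; nlinarith [Real.pi_pos]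

theorem aeval_exp_schurPoly {p m : ℕ} (hpm : p = 2 * m + 1) :
    aeval (exp (2 * Real.pi * I / p)) (schurPoly p m) = I ^ (m % 2) * Real.sqrt p := by
  set s : ℕ → ℝ := fun k => Real.sin (2 * Real.pi * (2 * k + 1 : ℕ) / p)
  have hprod : aeval (exp (2 * Real.pi * I / p)) (schurPoly p m) =
      (2 * I) ^ m * ((∏ k ∈ range m, s k : ℝ) : ℂ) := by
    simp only [schurPoly, map_prod, map_sub, map_pow, aeval_X]
    rw [prod_congr rfl fun k hk =>
        Complex.exp_two_pi_mul_I_div_pow_sub_pow (by omega) (by have := mem_range.1 hk; omega),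
      prod_mul_distrib, prod_const, card_range, ofReal_prod]
  have hsign := neg_one_pow_mul_prod_pos (f := s) (l := (m + 1) / 2) (m := m) (by omega)
    (fun k hk => Real.sin_two_pi_mul_div_pos (a := 2 * k + 1) (p := p) (by omega) (by omega))
    (fun k hk hkm => Real.sin_two_pi_mul_div_neg (a := 2 * k + 1) (p := p) (by omega) (by omega))
  rw [show m - (m + 1) / 2 = m / 2 by omega] at hsign
  set r : ℝ := 2 ^ m * ((-1) ^ (m / 2) * ∏ k ∈ range m, s k)
  have hI : I ^ m = (-1) ^ (m / 2) * I ^ (m % 2) := by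
    conv_lhs => rw [← Nat.div_add_mod m 2]
    rw [pow_add, pow_mul, I_sq]
  have hr : aeval (exp (2 * Real.pi * I / p)) (schurPoly p m) = I ^ (m % 2) * r := by
    rw [hprod, mul_pow, hI]
    push_cast [r]
    ring
  have hr2 : r ^ 2 = p := by
    have hsq := sq_aeval_schurPoly (isPrimitiveRoot_exp p (by omega)) hpm
    rw [hr, mul_pow, ← pow_mul, mul_comm (m % 2), pow_mul, I_sq, ← neg_one_pow_eq_pow_mod_two]
      at hsq
    exact_mod_cast mul_left_cancel₀ (pow_ne_zero m (neg_ne_zero.2 one_ne_zero)) hsq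
  rw [hr, ← hr2, Real.sqrt_sq (by positivity)]

/-- The quadratic Gauss sum for an odd prime `N`. -/
theorem quadratic_gauss_sum (N : ℕ) (hN : N.Prime) (hodd : Odd N) :
    (∑ n ∈ Finset.range N,
        Complex.exp (2 * (Real.pi : ℂ) * Complex.I * (n : ℂ) ^ 2 / N))
      = if N % 4 = 1 then (Real.sqrt N : ℂ) else Complex.I * (Real.sqrt N : ℂ) := by
  obtain ⟨m, hm⟩ := hodd
  have hsum : ∑ n ∈ range N, exp (2 * Real.pi * I * (n : ℂ) ^ 2 / N) =
      aeval (exp (2 * Real.pi * I / N)) (gaussPoly N) := by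
    simp only [gaussPoly, map_sum, map_pow, aeval_X]
    refine sum_congr rfl fun n _ => ?_
    rw [← Complex.exp_nat_mul]
    push_cast
    ring_nf
  rw [hsum, aeval_gaussPoly_eq_aeval_schurPoly hN hm (isPrimitiveRoot_exp N hN.ne_zero),
    aeval_exp_schurPoly hm]
  rcases Nat.mod_two_eq_zero_or_one m with h | h
  · rw [if_pos (by omega), h, pow_zero, one_mul]
  · rw [if_neg (by omega), h, pow_one]
end

section
/- For an odd prime N and u coprime to N, every coefficient of the DFT of the Zadoff–Chu sequence has modulus √N: |X_u[k]| = √N for all k, where X_u[k] = Σ_{n=0}^{N-1} exp(-iπ u n(n+1)/N)·exp(-2πi kn/N). -/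
/-!
The phase `-u n(n+1)/2 - k n` is a quadratic polynomial `f(n) = a n² + b n` over `ZMod N` with
`2a = -u` a unit (`2` is invertible since `N` is odd). For a primitive additive character `ψ`,
`|∑ ψ(f x)|² = ∑_{x,y} ψ(f x - f y)`; writing `x = y + h`, the difference `f(y + h) - f y` is
`2ahy + f h`, so the sum over `y` vanishes unless `2ah = 0`, i.e. unless `h = 0`, leaving `|R|`.
-/

open Finset

namespace AddChar

variable {R K : Type*} [CommRing R] [Fintype R] [DecidableEq R] [RCLike K]

theorem norm_sum_quadratic_sq {ψ : AddChar R K} (hψ : ψ.IsPrimitive) {a : R}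
    (ha : IsUnit (2 * a)) (b : R) :
    ‖∑ x, ψ (a * x ^ 2 + b * x)‖ ^ 2 = Fintype.card R := by
  set f : R → R := fun x ↦ a * x ^ 2 + b * x
  have hdiff : ∀ y h, f (y + h) + -f y = y * (2 * a * h) + f h := fun y h ↦ by
    simp only [f]; ring
  apply RCLike.ofReal_injective (K := K)
  push_cast
  rw [← RCLike.mul_conj, map_sum, sum_mul_sum, sum_comm]
  calc ∑ y, ∑ x, ψ (f x) * (starRingEnd K) (ψ (f y))
      = ∑ y, ∑ h, ψ (f (y + h) + -f y) := by
        refine sum_congr rfl fun y _ ↦ ?_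
        rw [← Equiv.sum_comp (Equiv.addLeft y)]
        simp [map_add_eq_mul, map_neg_eq_conj]
    _ = ∑ h, (∑ y, ψ (y * (2 * a * h))) * ψ (f h) := by
        rw [sum_comm]
        simp only [hdiff, map_add_eq_mul, sum_mul]
    _ = Fintype.card R := by
        simp [sum_mulShift _ hψ, ha.mul_right_eq_zero, f]

end AddChar

lemma ZMod.sum_range_natCast {M : Type*} [AddCommMonoid M] (N : ℕ) [NeZero N]
    (f : ZMod N → M) : ∑ n ∈ range N, f n = ∑ x : ZMod N, f x :=
  sum_nbij' (↑) ZMod.val (fun _ _ ↦ mem_univ _) (fun x _ ↦ mem_range.2 (ZMod.val_lt x))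
    (fun _ hn ↦ ZMod.val_cast_of_lt (mem_range.1 hn)) (fun x _ ↦ ZMod.natCast_zmod_val x)
    (fun _ _ ↦ rfl)

lemma ZMod.two_mul_inv_two {N : ℕ} (hodd : Odd N) : (2 : ZMod N) * (2 : ZMod N)⁻¹ = 1 :=
  mod_cast ZMod.coe_mul_inv_eq_one 2 (Nat.coprime_two_left.2 hodd)

lemma zadoffChu_term_eq_stdAddChar (N : ℕ) [NeZero N] (hodd : Odd N) (u k : ℤ) (n : ℕ) :
    Complex.exp (-((Real.pi : ℂ) * u * (n : ℂ) * ((n : ℂ) + 1) / N) * Complex.I)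
        * Complex.exp (-(2 * (Real.pi : ℂ) * Complex.I * k * n / N))
      = ZMod.stdAddChar (-((u : ZMod N) * 2⁻¹) * (n : ZMod N) ^ 2
        + (-((u : ZMod N) * 2⁻¹) - (k : ZMod N)) * (n : ZMod N)) := by
  set T := n * (n + 1) / 2
  have hT : T * 2 = n * (n + 1) := Nat.div_mul_cancel (Nat.even_mul_succ_self n).two_dvd
  have hphase : ((-(u * T + k * n) : ℤ) : ZMod N)
      = -((u : ZMod N) * 2⁻¹) * (n : ZMod N) ^ 2
        + (-((u : ZMod N) * 2⁻¹) - (k : ZMod N)) * (n : ZMod N) := by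
    have hTZ : (T : ZMod N) * 2 = n * (n + 1) := mod_cast congrArg (Nat.cast : ℕ → ZMod N) hT
    push_cast
    linear_combination (-(u : ZMod N) * 2⁻¹) * hTZ + (u * T : ZMod N) * ZMod.two_mul_inv_two hodd
  rw [← hphase, ZMod.stdAddChar_coe, ← Complex.exp_add]
  have hTC : (T : ℂ) * 2 = n * (n + 1) := by exact_mod_cast hT
  have hNC : (N : ℂ) ≠ 0 := Nat.cast_ne_zero.2 (NeZero.ne N)
  congr 1
  push_cast
  field_simp
  linear_combination (u : ℂ) * hTC

/-- Every DFT coefficient of a Zadoff–Chu sequence of odd prime length has modulus `√N`. -/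
theorem zc_dft_abs (N : ℕ) (hN : N.Prime) (hodd : Odd N) (u : ℤ)
    (hu1 : 1 ≤ u) (hu2 : u ≤ (N : ℤ) - 1) (k : ℤ) :
    ‖∑ n ∈ Finset.range N,
        Complex.exp (-((Real.pi : ℂ) * u * (n : ℂ) * ((n : ℂ) + 1) / N) * Complex.I)
          * Complex.exp (-(2 * (Real.pi : ℂ) * Complex.I * k * n / N))‖
      = Real.sqrt N := by
  have := Fact.mk hN
  have hu : (u : ZMod N) ≠ 0 := by
    rw [Ne, ZMod.intCast_zmod_eq_zero_iff_dvd]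
    exact fun h ↦ by linarith [Int.le_of_dvd (by linarith) h]
  have hlead : IsUnit (2 * -((u : ZMod N) * 2⁻¹)) := by
    have : 2 * -((u : ZMod N) * 2⁻¹) = -u := by
      linear_combination (-(u : ZMod N)) * ZMod.two_mul_inv_two hodd
    exact this ▸ (neg_ne_zero.2 hu).isUnit
  rw [sum_congr rfl fun n _ ↦ zadoffChu_term_eq_stdAddChar N hodd u k n,
    ZMod.sum_range_natCast N fun x ↦ ZMod.stdAddChar (_ * x ^ 2 + _ * x),
    ← Real.sqrt_sq (norm_nonneg _),
    AddChar.norm_sum_quadratic_sq (ZMod.isPrimitive_stdAddChar N) hlead, ZMod.card]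
end

section
/- The continuous autocorrelation of the OFDM-modulated Zadoff–Chu signal equals the Dirichlet kernel: (1/T)∫₀^T x_u(t)·conj(x_u(t+τ)) dt = (1/N) Σ_{k=−N₀}^{N₀} exp(-2πi kτ/T), which equals 1 when τ/T ∈ ℤ and sin(πNτ/T)/(N sin(πτ/T)) otherwise. -/
open Complex Classical
open Finset ComplexConjugate
open scoped Real

/-! The signal is a trigonometric polynomial with coefficients `X k / N`, so by orthogonality
of the exponentials on `[0, T]` its autocorrelation is `∑ |X k / N|² e^{-2πikτ/T}`.
The Zadoff–Chu DFT coefficients all have `|X k|² = N`: `X k` is a sum over one period of powers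
`η ^ q(n)` of `η = e^{πi/N}` with `q` quadratic (periodic because `N` is odd), so `|X k|²` is a
sum over lags `d` of geometric sums in the `N`-th root of unity `(η²)^{-u d}`, and these vanish
unless `N ∣ u d`, i.e. `d = 0`. What is left is the Dirichlet kernel, a geometric sum in
`e^{-2πiτ/T}`. -/

namespace Function.Periodic

theorem sum_range_add {M : Type*} [AddCommMonoid M] {a : ℕ → M} {N : ℕ} (ha : Periodic a N)
    (n : ℕ) : ∑ d ∈ range N, a (n + d) = ∑ d ∈ range N, a d := by
  induction n with
  | zero => simp
  | succ n ih =>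
    rcases N with _ | M
    · simp
    rw [← ih, sum_range_succ, sum_range_succ', add_zero, ← ha n]
    simp only [add_assoc, add_comm 1]

theorem sum_range_mul_sum_range {R : Type*} [NonUnitalNonAssocSemiring R] {a : ℕ → R} {N : ℕ}
    (ha : Periodic a N) (b : ℕ → R) :
    (∑ m ∈ range N, a m) * ∑ n ∈ range N, b n
      = ∑ d ∈ range N, ∑ n ∈ range N, a (n + d) * b n := by
  rw [sum_comm, sum_mul_sum, sum_comm]
  refine sum_congr rfl fun n _ => ?_
  rw [← sum_mul, ← sum_mul, ha.sum_range_add]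

end Function.Periodic

theorem IsPrimitiveRoot.sum_range_pow_zpow {K : Type*} [Field K] {ζ : K} {N : ℕ}
    (hζ : IsPrimitiveRoot ζ N) (j : ℤ) :
    ∑ n ∈ range N, (ζ ^ j) ^ n = if (N : ℤ) ∣ j then (N : K) else 0 := by
  split_ifs with h
  · simp [(hζ.zpow_eq_one_iff_dvd j).mpr h]
  · have hN : (ζ ^ j) ^ N = 1 := by
      rw [← zpow_natCast, ← zpow_mul, mul_comm, zpow_mul, zpow_natCast, hζ.pow_eq_one,
        one_zpow]
    rw [geom_sum_eq (mt (hζ.zpow_eq_one_iff_dvd j).mp h), hN, sub_self, zero_div]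

noncomputable def zadoffChuSummand (η : ℂ) (u k : ℤ) (n : ℕ) : ℂ :=
  η ^ (-(u * n * (n + 1) + 2 * k * n))

section ZadoffChu

variable {η : ℂ} {N : ℕ} {u : ℤ}

theorem zadoffChuSummand_periodic (hη : η ^ (2 * N) = 1) (hN : Odd N) (k : ℤ) :
    Function.Periodic (zadoffChuSummand η u k) N := by
  obtain ⟨M, rfl⟩ := hN
  have hη0 : η ≠ 0 := by rintro rfl; simp at hη
  have hperiod (a j : ℤ) : η ^ (a + (2 * (2 * M + 1) : ℕ) * j) = η ^ a := by
    rw [zpow_add₀ hη0, zpow_mul, zpow_natCast, hη, one_zpow, mul_one]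
  intro n
  conv_rhs => rw [zadoffChuSummand, ← hperiod _ (-(u * (n + M + 1) + k))]
  rw [zadoffChuSummand]
  congr 1
  push_cast
  ring

theorem zadoffChuSummand_add_mul_inv (hη : η ≠ 0) (k : ℤ) (n d : ℕ) :
    zadoffChuSummand η u k (n + d) * (zadoffChuSummand η u k n)⁻¹
      = zadoffChuSummand η u k d * ((η ^ 2) ^ (-(u * d))) ^ n := by
  simp only [zadoffChuSummand, ← zpow_neg, ← zpow_natCast, ← zpow_mul, ← zpow_add₀ hη]
  congr 1
  push_cast
  ring

theorem zadoffChuSummand_sum_mul_conj (hη : IsPrimitiveRoot η (2 * N)) (hN : Odd N)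
    (hu : IsCoprime u N) (k : ℤ) :
    (∑ n ∈ range N, zadoffChuSummand η u k n)
      * conj (∑ n ∈ range N, zadoffChuSummand η u k n) = N := by
  have hN0 : 0 < N := hN.pos
  have hη0 : η ≠ 0 := hη.ne_zero (by omega)
  have hconj (n : ℕ) : conj (zadoffChuSummand η u k n) = (zadoffChuSummand η u k n)⁻¹ := by
    refine (inv_eq_conj ?_).symm
    rw [zadoffChuSummand, norm_zpow, hη.norm'_eq_one (by omega), one_zpow]
  have hζ : IsPrimitiveRoot (η ^ 2) N := hη.pow (by omega) rfl
  rw [map_sum, (zadoffChuSummand_periodic hη.pow_eq_one hN k).sum_range_mul_sum_range]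
  simp only [hconj, zadoffChuSummand_add_mul_inv hη0, ← mul_sum, hζ.sum_range_pow_zpow]
  rw [sum_eq_single_of_mem 0 (mem_range.mpr hN0)]
  · simp [zadoffChuSummand]
  intro d hd hd0
  have hndvd : ¬(N : ℤ) ∣ -(u * d) := by
    rw [Int.dvd_neg]
    exact fun h => hd0 <| Nat.eq_zero_of_dvd_of_lt
      (Int.natCast_dvd_natCast.mp (hu.symm.dvd_of_dvd_mul_left h)) (mem_range.mp hd)
  rw [if_neg hndvd, mul_zero]

end ZadoffChu

theorem IsPrimitiveRoot.exp_pi_mul_I_div {N : ℕ} (hN : N ≠ 0) :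
    IsPrimitiveRoot (exp (π * I / N)) (2 * N) := by
  convert isPrimitiveRoot_exp (2 * N) (by omega) using 2
  push_cast
  field_simp

theorem exp_mul_exp_eq_zadoffChuSummand (N : ℕ) (u k : ℤ) (n : ℕ) :
    exp (-((π : ℂ) * u * n * (n + 1) / N) * I) * exp (-(2 * π * I * k * n / N))
      = zadoffChuSummand (exp (π * I / N)) u k n := by
  rw [zadoffChuSummand, ← exp_add, ← exp_int_mul]
  push_cast
  ring_nf

theorem integral_exp_two_pi_I_int_mul {T : ℝ} (hT : 0 < T) (m : ℤ) :
    ∫ t in (0 : ℝ)..T, exp (2 * π * I * m * t / T) = if m = 0 then (T : ℂ) else 0 := by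
  rcases eq_or_ne m 0 with rfl | hm
  · simp
  have := Fact.mk hT
  have h := fourierCoeff_eq_intervalIntegral (T := T) (fourier m) 0 0
  rw [fourierCoeff_fourier, Pi.single_eq_of_ne hm.symm, eq_comm, smul_eq_zero] at h
  simpa [hm, hT.ne', fourier_coe_apply] using h

theorem exp_mul_conj_exp_add (T : ℝ) (k l : ℤ) (t τ : ℝ) :
    exp (2 * π * I * k * t / T) * conj (exp (2 * π * I * l * ↑(t + τ) / T))
      = exp (-(2 * π * I * l * τ / T)) * exp (2 * π * I * ↑(k - l) * t / T) := by
  rw [← exp_conj, ← exp_add, ← exp_add]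
  congr 1
  simp only [map_div₀, map_mul, conj_I, conj_ofReal, map_intCast, map_ofNat]
  push_cast
  ring

theorem trigPoly_autocorrelation {T : ℝ} (hT : 0 < T) (S : Finset ℤ) (c : ℤ → ℂ)
    (f : ℝ → ℂ)
    (hf : ∀ t, f t = ∑ k ∈ S, c k * exp (2 * π * I * k * t / T)) (τ : ℝ) :
    (1 / (T : ℂ)) * ∫ t in (0 : ℝ)..T, f t * conj (f (t + τ))
      = ∑ k ∈ S, c k * conj (c k) * exp (-(2 * π * I * k * τ / T)) := by
  have hexpand (t : ℝ) : f t * conj (f (t + τ)) = ∑ k ∈ S, ∑ l ∈ S,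
      c k * conj (c l) * exp (-(2 * π * I * l * τ / T))
        * exp (2 * π * I * ↑(k - l) * t / T) := by
    simp only [hf, map_sum, map_mul, sum_mul_sum]
    refine sum_congr rfl fun k _ => sum_congr rfl fun l _ => ?_
    rw [mul_assoc (c k * conj (c l)), ← exp_mul_conj_exp_add]
    ring
  simp only [hexpand]
  rw [intervalIntegral.integral_finsetSum fun k _ =>
    Continuous.intervalIntegrable (by fun_prop) _ _, mul_sum]
  refine sum_congr rfl fun k hk => ?_
  rw [intervalIntegral.integral_finsetSum fun l _ =>
    Continuous.intervalIntegrable (by fun_prop) _ _]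
  simp only [intervalIntegral.integral_const_mul, integral_exp_two_pi_I_int_mul hT, sub_eq_zero,
    mul_ite, mul_zero, sum_ite_eq, if_pos hk]
  field_simp [hT.ne']

theorem Finset.sum_Icc_neg_eq_sum_range {M : Type*} [AddCommMonoid M] (n : ℕ) (f : ℤ → M) :
    ∑ k ∈ Icc (-n : ℤ) n, f k = ∑ j ∈ range (2 * n + 1), f (j - n) := by
  refine sum_nbij' (fun k => (k + n).toNat) (fun j => (j - n : ℤ)) ?_ ?_ ?_ ?_ ?_ <;>
    intros <;> simp_all <;> first | omega | (congr 1; omega)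

theorem Complex.sin_mul_sum_Icc_exp_neg (n : ℕ) (θ : ℂ) :
    sin θ * ∑ k ∈ Icc (-n : ℤ) n, exp (-(2 * k * θ * I)) = sin ((2 * n + 1) * θ) := by
  set w := exp (-(θ * I))
  have hw : w ≠ 0 := exp_ne_zero _
  have hsin (m : ℕ) : sin (m * θ) = (w ^ m - (w ^ m)⁻¹) * I / 2 := by
    rw [sin, ← exp_nat_mul, ← exp_neg]
    ring_nf
  have hterm (j : ℕ) : exp (-(2 * ↑((j : ℤ) - n) * θ * I)) = (w ^ 2) ^ j / w ^ (2 * n) := by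
    rw [eq_div_iff (pow_ne_zero _ hw), ← pow_mul, ← exp_nat_mul, ← exp_nat_mul, ← exp_add]
    congr 1
    push_cast
    ring
  have hgeom := geom_sum_mul (w ^ 2) (2 * n + 1)
  rw [sum_Icc_neg_eq_sum_range, sum_congr rfl fun j _ => hterm j, ← sum_div]
  have hsin1 : sin θ = (w - w⁻¹) * I / 2 := by simpa using hsin 1
  have hsinN : sin ((2 * n + 1) * θ) = (w ^ (2 * n + 1) - (w ^ (2 * n + 1))⁻¹) * I / 2 := by
    exact_mod_cast hsin (2 * n + 1)
  rw [hsin1, hsinN]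
  field_simp
  rw [mul_comm (w ^ 2 - 1), hgeom]
  ring

theorem one_div_mul_sum_Icc_exp_eq_ite {T : ℝ} (hT : 0 < T) (n : ℕ) (τ : ℝ) :
    (1 / ((2 * n + 1 : ℕ) : ℂ)) * ∑ k ∈ Icc (-n : ℤ) n, exp (-(2 * π * I * k * τ / T))
      = if ∃ m : ℤ, τ = m * T then 1
        else ((Real.sin (π * (2 * n + 1 : ℕ) * τ / T)
          / ((2 * n + 1 : ℕ) * Real.sin (π * τ / T)) : ℝ) : ℂ) := by
  split_ifs with hτ
  · obtain ⟨m, rfl⟩ := hτ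
    have hterm (k : ℤ) : exp (-(2 * π * I * k * ↑(m * T) / T)) = 1 := by
      rw [← exp_int_mul_two_pi_mul_I (-(k * m))]
      congr 1
      push_cast
      field_simp [hT.ne']
    simp only [hterm, sum_const, Int.card_Icc, nsmul_eq_mul, mul_one]
    rw [show ((n : ℤ) + 1 - -n).toNat = 2 * n + 1 by omega]
    exact one_div_mul_cancel (Nat.cast_ne_zero.mpr (by omega))
  · have hsin_real : Real.sin (π * τ / T) ≠ 0 := by
      rw [Ne, Real.sin_eq_zero_iff]
      rintro ⟨m, hm⟩
      exact hτ ⟨m, by field_simp at hm; linarith⟩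
    have hsin : sin ((π : ℂ) * τ / T) ≠ 0 := by exact_mod_cast hsin_real
    have hterm (k : ℤ) :
        exp (-(2 * π * I * k * τ / T)) = exp (-(2 * k * (π * τ / T) * I)) := by
      ring_nf
    rw [sum_congr rfl fun k _ => hterm k]
    have hsum := sin_mul_sum_Icc_exp_neg n (π * τ / T)
    set S := ∑ k ∈ Icc (-n : ℤ) n, exp (-(2 * k * (π * τ / T) * I))
    push_cast
    rw [show (π : ℂ) * (2 * n + 1) * τ / T = (2 * n + 1) * (π * τ / T) by ring, ← hsum]
    field_simp

theorem zc_ofdm_autocorr_general (N : ℕ) (u : ℤ)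
    (hu : Int.gcd u (N : ℤ) = 1) (T : ℝ) (hT : 0 < T) (N₀ : ℕ) (hN₀ : N = 2 * N₀ + 1)
    (X : ℤ → ℂ)
    (hX : ∀ k : ℤ, X k = ∑ n ∈ Finset.range N,
      Complex.exp (-((Real.pi : ℂ) * u * (n : ℂ) * ((n : ℂ) + 1) / N) * Complex.I)
        * Complex.exp (-(2 * (Real.pi : ℂ) * Complex.I * k * n / N)))
    (f : ℝ → ℂ)
    (hf : ∀ t : ℝ, f t = (1 / (N : ℂ)) * ∑ k ∈ Finset.Icc (-(N₀ : ℤ)) (N₀ : ℤ),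
      X k * Complex.exp (2 * (Real.pi : ℂ) * Complex.I * (k : ℂ) * (t : ℂ) / T))
    (τ : ℝ) :
    (1 / (T : ℂ)) * (∫ t in (0 : ℝ)..T, f t * (starRingEnd ℂ) (f (t + τ)))
        = (1 / (N : ℂ)) * ∑ k ∈ Finset.Icc (-(N₀ : ℤ)) (N₀ : ℤ),
            Complex.exp (-(2 * (Real.pi : ℂ) * Complex.I * (k : ℂ) * (τ : ℂ) / T))
      ∧ ((1 / (N : ℂ)) * ∑ k ∈ Finset.Icc (-(N₀ : ℤ)) (N₀ : ℤ),
            Complex.exp (-(2 * (Real.pi : ℂ) * Complex.I * (k : ℂ) * (τ : ℂ) / T)))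
        = if ∃ m : ℤ, τ = m * T then 1
          else ((Real.sin (Real.pi * N * τ / T) / (N * Real.sin (Real.pi * τ / T)) : ℝ) : ℂ) := by
  have hN : (N : ℂ) ≠ 0 := by exact_mod_cast (show N ≠ 0 by omega)
  have hX_mul_conj (k : ℤ) : X k * conj (X k) = N := by
    simpa only [hX, exp_mul_exp_eq_zadoffChuSummand] using
      zadoffChuSummand_sum_mul_conj (IsPrimitiveRoot.exp_pi_mul_I_div (by omega)) ⟨N₀, hN₀⟩
        (Int.isCoprime_iff_gcd_eq_one.mpr hu) k
  have hf' (t : ℝ) :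
      f t = ∑ k ∈ Icc (-(N₀ : ℤ)) N₀, X k / N * exp (2 * π * I * k * t / T) := by
    rw [hf, mul_sum]
    exact sum_congr rfl fun k _ => by ring
  refine ⟨?_, by subst hN₀; exact one_div_mul_sum_Icc_exp_eq_ite hT N₀ τ⟩
  rw [trigPoly_autocorrelation hT _ _ f hf', mul_sum]
  refine sum_congr rfl fun k _ => ?_
  rw [map_div₀, div_mul_div_comm, hX_mul_conj, Complex.conj_natCast]
  field_simp

/-- The continuous autocorrelation of the OFDM-modulated Zadoff–Chu signal equals the
Dirichlet kernel. -/
theorem zc_ofdm_autocorr (N : ℕ) (hN : N.Prime) (hodd : Odd N) (u : ℤ)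
    (hu : Int.gcd u (N : ℤ) = 1) (T : ℝ) (hT : 0 < T) (N₀ : ℕ) (hN₀ : N = 2 * N₀ + 1)
    (X : ℤ → ℂ)
    (hX : ∀ k : ℤ, X k = ∑ n ∈ Finset.range N,
      Complex.exp (-((Real.pi : ℂ) * u * (n : ℂ) * ((n : ℂ) + 1) / N) * Complex.I)
        * Complex.exp (-(2 * (Real.pi : ℂ) * Complex.I * k * n / N)))
    (f : ℝ → ℂ)
    (hf : ∀ t : ℝ, f t = (1 / (N : ℂ)) * ∑ k ∈ Finset.Icc (-(N₀ : ℤ)) (N₀ : ℤ),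
      X k * Complex.exp (2 * (Real.pi : ℂ) * Complex.I * (k : ℂ) * (t : ℂ) / T))
    (τ : ℝ) :
    (1 / (T : ℂ)) * (∫ t in (0 : ℝ)..T, f t * (starRingEnd ℂ) (f (t + τ)))
        = (1 / (N : ℂ)) * ∑ k ∈ Finset.Icc (-(N₀ : ℤ)) (N₀ : ℤ),
            Complex.exp (-(2 * (Real.pi : ℂ) * Complex.I * (k : ℂ) * (τ : ℂ) / T))
      ∧ ((1 / (N : ℂ)) * ∑ k ∈ Finset.Icc (-(N₀ : ℤ)) (N₀ : ℤ),
            Complex.exp (-(2 * (Real.pi : ℂ) * Complex.I * (k : ℂ) * (τ : ℂ) / T)))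
        = if ∃ m : ℤ, τ = m * T then 1
          else ((Real.sin (Real.pi * N * τ / T) / (N * Real.sin (Real.pi * τ / T)) : ℝ) : ℂ) :=
  zc_ofdm_autocorr_general N u hu T hT N₀ hN₀ X hX f hf τ
end

section
/- For odd N, Σ_{n=0}^{N-1} 1/(N·sin(π(2n+1)/(2N))) ≤ (4N/π)·Σ_{n=0}^{N-1} 1/((1+2n)(2N−1−2n)), as a consequence of the inequality sin z ≥ z(1 − z/π) for 0 ≤ z ≤ π. -/
open Real

lemma sin_half_lb {z : ℝ} (h0 : 0 ≤ z) (h1 : z ≤ π / 2) :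
    z - z ^ 2 / π ≤ Real.sin z := by
  have hmono : MonotoneOn (fun x : ℝ => Real.sin x - x + x ^ 2 / π)
      (Set.Icc 0 (π / 2)) := by
    apply monotoneOn_of_deriv_nonneg (convex_Icc _ _)
    · fun_prop
    · intro x hx
      have : Differentiable ℝ (fun x : ℝ => Real.sin x - x + x ^ 2 / π) := by
        fun_prop
      exact (this x).differentiableWithinAt
    · intro x hx
      rw [interior_Icc] at hx
      have hder : HasDerivAt (fun x : ℝ => Real.sin x - x + x ^ 2 / π)
          (Real.cos x - 1 + 2 * x ^ 1 / π) x :=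
        ((Real.hasDerivAt_sin x).sub (hasDerivAt_id x)).add
          (((hasDerivAt_pow 2 x).div_const π).congr_deriv (by push_cast; ring))
      rw [hder.deriv]
      have hcos := Real.one_sub_mul_le_cos (x := x) hx.1.le hx.2.le
      have hπ : 0 < π := Real.pi_pos
      have h2 : 2 / π * x = 2 * x ^ 1 / π := by ring
      linarith [h2 ▸ hcos]
  have := hmono (Set.mem_Icc.2 ⟨le_refl 0, by positivity⟩) (Set.mem_Icc.2 ⟨h0, h1⟩) h0
  simp only [Real.sin_zero] at this
  have hπ : 0 < π := Real.pi_pos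
  simp at this
  linarith

lemma sin_lb {z : ℝ} (h0 : 0 ≤ z) (h1 : z ≤ π) : z * (1 - z / π) ≤ Real.sin z := by
  have hπ : 0 < π := Real.pi_pos
  rcases le_or_gt z (π / 2) with h | h
  · have h1 := sin_half_lb h0 h
    have h2 : z * (1 - z / π) = z - z ^ 2 / π := by ring
    linarith [h2 ▸ h1]
  · have hw0 : 0 ≤ π - z := by linarith
    have hw1 : π - z ≤ π / 2 := by linarith
    have h1 := sin_half_lb hw0 hw1
    rw [Real.sin_pi_sub] at h1
    have heq : z * (1 - z / π) = (π - z) - (π - z) ^ 2 / π := by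
      field_simp; ring
    rw [heq]; exact h1

/-- Bounding the Dirichlet-kernel sum using `sin z ≥ z (1 - z/π)`. -/
theorem dirichlet_sum_bound (N : ℕ) (hN : 0 < N) (hodd : Odd N) :
    (∑ n ∈ Finset.range N,
        1 / ((N : ℝ) * Real.sin (Real.pi * (2 * (n : ℝ) + 1) / (2 * N))))
      ≤ (4 * N / Real.pi) * ∑ n ∈ Finset.range N,
          1 / ((1 + 2 * (n : ℝ)) * (2 * (N : ℝ) - 1 - 2 * (n : ℝ))) := by
  rw [Finset.mul_sum]
  apply Finset.sum_le_sum
  intro n hn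
  have hπ : 0 < π := Real.pi_pos
  have hNR : (0:ℝ) < N := by exact_mod_cast hN
  have hnN : (n:ℝ) + 1 ≤ N := by exact_mod_cast Finset.mem_range.1 hn
  have hn0 : (0:ℝ) ≤ n := Nat.cast_nonneg n
  set z : ℝ := π * (2 * (n:ℝ) + 1) / (2 * N) with hz
  have hz0 : 0 < z := by positivity
  have hzπ : z ≤ π := by
    rw [hz, div_le_iff₀ (by positivity)]
    nlinarith
  have hsin := sin_lb hz0.le hzπ
  have hBpos : (0:ℝ) < 2 * (N:ℝ) - 1 - 2 * (n:ℝ) := by nlinarith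
  have hApos : (0:ℝ) < 1 + 2 * (n:ℝ) := by linarith
  have hkey : π * (1 + 2 * (n:ℝ)) * (2 * (N:ℝ) - 1 - 2 * (n:ℝ)) / (4 * N)
      ≤ (N:ℝ) * Real.sin z := by
    have h2 : (N:ℝ) * (z * (1 - z / π)) ≤ N * Real.sin z :=
      mul_le_mul_of_nonneg_left hsin hNR.le
    have heq : (N:ℝ) * (z * (1 - z / π))
        = π * (1 + 2 * (n:ℝ)) * (2 * (N:ℝ) - 1 - 2 * (n:ℝ)) / (4 * N) := by
      rw [hz]; field_simp; ring
    linarith [heq ▸ h2]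
  have hDpos : (0:ℝ) < π * (1 + 2 * (n:ℝ)) * (2 * (N:ℝ) - 1 - 2 * (n:ℝ)) / (4 * N) := by
    positivity
  calc 1 / ((N:ℝ) * Real.sin z)
      ≤ 1 / (π * (1 + 2 * (n:ℝ)) * (2 * (N:ℝ) - 1 - 2 * (n:ℝ)) / (4 * N)) :=
        one_div_le_one_div_of_le hDpos hkey
    _ = 4 * N / π * (1 / ((1 + 2 * (n:ℝ)) * (2 * (N:ℝ) - 1 - 2 * (n:ℝ)))) := by
        rw [div_mul_eq_mul_div, mul_one_div, one_div_div, div_div]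
        congr 1
        ring
end
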